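/- Comparison of the integral and fractional optimal loads: under assumption (C3), almost surely ρₙ − 3‖c‖_∞ ≤ ρ̃ₙ ≤ ρₙ, where ρ̃ₙ is the optimal load over fractional allocation matrices. Consequently, the sequences {ρ̃ₙ/n} and {ρₙ/n} are exponentially equivalent. -/

import Mathlib

open MeasureTheory Filter Asymptotics

noncomputable section

namespace LoadOpt

/-- `j = e^{2iπ/3}`, primitive cube root of unity. -/
def jc : ℂ := Complex.exp (2 * Real.pi * Complex.I / 3)

/-- `λ = 2 (3√3)^{-1/2}`. -/
def lam : ℝ := 2 / Real.sqrt (3 * Real.sqrt 3)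

/-- The bins `B₁, B₂, B₃` (indexed by `0, 1, 2`). -/
def Bin : Fin 3 → ℂ := ![jc ^ 2 * (lam * Complex.I), (lam : ℂ) * Complex.I, jc * (lam * Complex.I)]

/-- The triangle `𝕋`, convex hull of the three bins. -/
def Tri : Set ℂ := convexHull ℝ {Bin 0, Bin 1, Bin 2}

/-- Cost functions `c₁, c₂, c₃` (indexed by `0, 1, 2`). -/
def costs (c : ℂ → ℝ) : Fin 3 → ℂ → ℝ := ![c, fun x => c (jc ^ 2 * x), fun x => c (jc * x)]

/-- Half-lines removed to make the Voronoi cells a partition: `D₁ = {ijt : t < 0}`,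
`D_l = {ij^l t : t ≤ 0}` for `l = 2, 3`. -/
def Dl : Fin 3 → Set ℂ :=
  ![{z | ∃ t : ℝ, t < 0 ∧ z = Complex.I * jc * t},
    {z | ∃ t : ℝ, t ≤ 0 ∧ z = Complex.I * jc ^ 2 * t},
    {z | ∃ t : ℝ, t ≤ 0 ∧ z = Complex.I * jc ^ 3 * t}]

/-- The Voronoi cells `𝕋₁, 𝕋₂, 𝕋₃` (indexed by `0, 1, 2`). -/
def cell (l : Fin 3) : Set ℂ :=
  {x ∈ Tri | dist x (Bin l) = ⨅ m : Fin 3, dist x (Bin m)} \ Dl l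

/-- The load `ρₙ(A)` of the allocation `A` of the points `x 0, …, x (n-1)`. -/
def load (c : ℂ → ℝ) {n : ℕ} (x : Fin n → ℂ) (A : Fin n → Fin 3) : ℝ :=
  Finset.univ.sup' Finset.univ_nonempty fun l => ∑ k, if A k = l then costs c l (x k) else 0

/-- The optimal load `ρₙ`. -/
def optLoad (c : ℂ → ℝ) {n : ℕ} (x : Fin n → ℂ) : ℝ :=
  Finset.univ.inf' Finset.univ_nonempty fun A : Fin n → Fin 3 => load c x A

/-- The suboptimal load `ρ̄ₙ`, allocating each point to the bin of its Voronoi cell. -/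
def subLoad (c : ℂ → ℝ) {n : ℕ} (x : Fin n → ℂ) : ℝ :=
  Finset.univ.sup' Finset.univ_nonempty fun l => ∑ k, (cell l).indicator (costs c l) (x k)

/-- `γ = ∫_{𝕋₁} c`. -/
def gamma (c : ℂ → ℝ) : ℝ := ∫ x in cell 0, c x

/-- Assumption (C1). -/
def C1 (c : ℂ → ℝ) : Prop :=
  ∀ x ∈ Tri, ∀ l : Fin 3, l ≠ 0 → dist x (Bin 0) < dist x (Bin l) → costs c 0 x < costs c l x

/-- Assumption (C2): symmetry of `c` w.r.t. the line through `0` and `B₁`, plus a Lipschitz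
property near `D₁ ∪ D₃`. -/
def C2 (c : ℂ → ℝ) : Prop :=
  (∀ θ ∈ Set.Icc (0 : ℝ) (2 * Real.pi), ∀ t : ℝ, 0 < t →
      (t : ℂ) * Complex.exp ((θ : ℂ) * Complex.I) ∈ Tri →
      c ((t : ℂ) * Complex.exp ((θ : ℂ) * Complex.I))
        = c ((t : ℂ) * Complex.exp (((-θ - Real.pi / 3 : ℝ) : ℂ) * Complex.I))) ∧
  ∃ (K : NNReal) (U : Set ℂ), IsOpen U ∧ Dl 0 ∪ Dl 2 ⊆ U ∧ LipschitzOnWith K c U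

/-- A sequence of real random variables `V n` satisfies the large deviation principle with
rate function `I` under `P`. -/
def SatisfiesLDP {Ω : Type*} [MeasurableSpace Ω] (P : Measure Ω)
    (V : (n : ℕ) → Ω → ℝ) (I : ℝ → EReal) : Prop :=
  (∀ y, 0 ≤ I y) ∧ LowerSemicontinuous I ∧
    ∀ s : Set ℝ, MeasurableSet s →
      -(⨅ y ∈ interior s, I y) ≤
          liminf (fun n : ℕ => ENNReal.log (P {ω | V n ω ∈ s}) / ((n : ℝ) : EReal)) atTop ∧
        limsup (fun n : ℕ => ENNReal.log (P {ω | V n ω ∈ s}) / ((n : ℝ) : EReal)) atTop ≤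
          -(⨅ y ∈ closure s, I y)

/-- `Λ(θ) = log (3 ∫_{𝕋₁} e^{θ c})`. -/
def Lambda (c : ℂ → ℝ) (θ : ℝ) : ℝ := Real.log (3 * ∫ x in cell 0, Real.exp (θ * c x))

/-- The Fenchel–Legendre transform `Λ*`. -/
def LambdaStar (c : ℂ → ℝ) (y : ℝ) : EReal := ⨆ θ : ℝ, ((θ * y - Lambda c θ : ℝ) : EReal)

/-- `Λ̄(θ) = log (∫_{𝕋₁} e^{θ c} + 2/3)`. -/
def LambdaBar (c : ℂ → ℝ) (θ : ℝ) : ℝ :=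
  Real.log ((∫ x in cell 0, Real.exp (θ * c x)) + 2 / 3)

/-- The Fenchel–Legendre transform `Λ̄*`. -/
def LambdaBarStar (c : ℂ → ℝ) (y : ℝ) : EReal := ⨆ θ : ℝ, ((θ * y - LambdaBar c θ : ℝ) : EReal)

/-- Assumption (C3): level sets of `c` are Lebesgue null. -/
def C3 (c : ℂ → ℝ) : Prop := ∀ t : ℝ, 0 ≤ t → volume (Tri ∩ c ⁻¹' {t}) = 0

/-- Assumption (C4): `c` is continuous on `𝕋`. -/
def C4 (c : ℂ → ℝ) : Prop := ContinuousOn c Tri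

/-- Assumption (C5): `c(B₁) < c(x) < c(0)` on `𝕋₁ \ {0, B₁}`. -/
def C5 (c : ℂ → ℝ) : Prop :=
  ∀ x ∈ cell 0, x ≠ 0 → x ≠ Bin 0 → c (Bin 0) < c x ∧ c x < c 0

/-- Assumption (C6). -/
def C6 (c : ℂ → ℝ) : Prop :=
  (∀ x ∈ Tri, x ≠ 0 →
      costs c 0 x * costs c 1 x * costs c 2 x /
          (costs c 0 x * costs c 1 x + costs c 0 x * costs c 2 x + costs c 1 x * costs c 2 x)
        < c 0 / 3) ∧
    c 0 / 3 < ∫ z in cell 1, c z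
/-- The fractional optimal load `ρ̃ₙ`, the optimum over fractional allocation matrices. -/
def fracOptLoad (c : ℂ → ℝ) {n : ℕ} (x : Fin n → ℂ) : ℝ :=
  sInf {r : ℝ | ∃ b : Fin n → Fin 3 → ℝ,
    (∀ k l, b k l ∈ Set.Icc (0 : ℝ) 1) ∧ (∀ k, b k 0 + b k 1 + b k 2 = 1) ∧
    r = Finset.univ.sup' Finset.univ_nonempty fun l => ∑ k, b k l * costs c l (x k)}

/-!
While two distinct rows of a fractional allocation are both fractional in the same two columns
`l ≠ l'`, mass can be moved between `l` and `l'` in these two rows so that the load of `l` is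
unchanged, the load of `l'` does not increase, and one more entry becomes `0` or `1`. Once this is
impossible, distinct fractional rows have distinct pairs of fractional columns, so there are at
most `(3 choose 2) = 3` of them, and rounding them arbitrarily raises each bin load by at most
`3 ‖c‖_∞`. This gives `ρₙ ≤ ρ̃ₙ + 3 ‖c‖_∞` as soon as the points lie in `𝕋`, which holds almost
surely; then `|ρ̃ₙ/n - ρₙ/n| ≤ 3 ‖c‖_∞ / n` is below any `δ > 0` for large `n`, so the deviation
probabilities eventually vanish.
-/

section Rounding

open Finset

def exitTime (a e : ℝ) : ℝ := if 0 < e then (1 - a) / e else -a / e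

lemma exitTime_pos {a e : ℝ} (ha : a ∈ Set.Ioo 0 1) (he : e ≠ 0) : 0 < exitTime a e := by
  unfold exitTime
  split_ifs with h
  · exact div_pos (by linarith [ha.2]) h
  · exact div_pos_of_neg_of_neg (by linarith [ha.1]) (lt_of_le_of_ne (not_lt.1 h) he)

lemma add_mul_mem_Icc_of_le_exitTime {a e s : ℝ} (ha : a ∈ Set.Icc 0 1) (he : e ≠ 0)
    (hs : 0 ≤ s) (hse : s ≤ exitTime a e) : a + s * e ∈ Set.Icc 0 1 := by
  unfold exitTime at hse
  split_ifs at hse with h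
  · have : s * e ≤ 1 - a := (le_div_iff₀ h).1 hse
    exact ⟨by nlinarith [ha.1], by linarith⟩
  · have h' : e < 0 := lt_of_le_of_ne (not_lt.1 h) he
    have : -a ≤ s * e := (le_div_iff_of_neg h').1 hse
    exact ⟨by linarith, by nlinarith [ha.2]⟩

lemma add_exitTime_mul_notMem_Ioo {a e : ℝ} (he : e ≠ 0) :
    a + exitTime a e * e ∉ Set.Ioo 0 1 := by
  unfold exitTime
  split_ifs <;> simp [div_mul_cancel₀ _ he]

lemma exists_pos_filter_Ioo_ssubset {κ : Type*} [Fintype κ] (b D : κ → ℝ)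
    (hb : ∀ i, b i ∈ Set.Icc 0 1) (hD : ∀ i, D i ≠ 0 → b i ∈ Set.Ioo 0 1) (hD₀ : ∃ i, D i ≠ 0) :
    ∃ t, 0 < t ∧ (∀ i, b i + t * D i ∈ Set.Icc 0 1) ∧
      {i | b i + t * D i ∈ Set.Ioo 0 1} ⊂ {i | b i ∈ Set.Ioo 0 1} := by
  classical
  set S := univ.filter fun i => D i ≠ 0
  have hS : S.Nonempty := let ⟨i, hi⟩ := hD₀; ⟨i, by simpa [S] using hi⟩
  set τ := fun i => exitTime (b i) (D i)
  obtain ⟨i₀, hi₀, hτ⟩ := S.exists_mem_eq_inf' hS τ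
  have hi₀' : D i₀ ≠ 0 := (mem_filter.1 hi₀).2
  have ht : 0 < S.inf' hS τ := (lt_inf'_iff hS).2 fun i hi =>
    exitTime_pos (hD i (mem_filter.1 hi).2) (mem_filter.1 hi).2
  refine ⟨S.inf' hS τ, ht, fun i => ?_, ?_⟩
  · by_cases hi : D i = 0
    · simpa [hi] using hb i
    · exact add_mul_mem_Icc_of_le_exitTime (hb i) hi ht.le (inf'_le _ (by simp [S, hi]))
  · refine Set.ssubset_iff_of_subset (fun i hi => ?_) |>.2 ⟨i₀, hD i₀ hi₀', ?_⟩
    · by_cases h : D i = 0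
      · simpa [h] using hi
      · exact hD i h
    · simp only [Set.mem_ofPred_eq, hτ]
      exact add_exitTime_mul_notMem_Ioo hi₀'

lemma exists_ne_zero_mul_add_mul_eq_zero_nonneg (c₁ c₂ d₁ d₂ : ℝ) :
    ∃ ε₁ ε₂ : ℝ, (ε₁ ≠ 0 ∨ ε₂ ≠ 0) ∧ ε₁ * c₁ + ε₂ * c₂ = 0 ∧ 0 ≤ ε₁ * d₁ + ε₂ * d₂ := by
  by_cases hc : c₁ = 0 ∧ c₂ = 0
  · obtain ⟨rfl, rfl⟩ := hc
    rcases le_total 0 d₁ with h | h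
    · exact ⟨1, 0, by simp, by ring, by linarith⟩
    · exact ⟨-1, 0, by simp, by ring, by linarith⟩
  · rcases le_total (c₁ * d₂) (c₂ * d₁) with h | h
    · exact ⟨c₂, -c₁, by rw [neg_ne_zero]; tauto, by ring, by linarith⟩
    · exact ⟨-c₂, c₁, by rw [neg_ne_zero]; tauto, by ring, by linarith⟩

variable {ι β : Type*} [Fintype β]

def IsFractionalAllocation (b : ι → β → ℝ) : Prop :=
  (∀ k l, b k l ∈ Set.Icc 0 1) ∧ ∀ k, ∑ l, b k l = 1

def fracEntries (b : ι → β → ℝ) : Set (ι × β) := {p | b p.1 p.2 ∈ Set.Ioo 0 1}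

def fracRows (b : ι → β → ℝ) : Set ι := {k | ∃ l, b k l ∈ Set.Ioo 0 1}

/-- Shift mass between columns `l` and `l'` in rows `k` and `k'`, in a direction that keeps the
load of `l` and does not increase that of `l'`, until one more entry becomes `0` or `1`. -/
lemma exists_exchange [Fintype ι] (w : ι → β → ℝ) {b : ι → β → ℝ}
    (hb : IsFractionalAllocation b)
    {k k' : ι} (hk : k ≠ k') {l l' : β} (hl : l ≠ l')
    (hkl : b k l ∈ Set.Ioo 0 1) (hkl' : b k l' ∈ Set.Ioo 0 1)
    (hk'l : b k' l ∈ Set.Ioo 0 1) (hk'l' : b k' l' ∈ Set.Ioo 0 1) :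
    ∃ b', IsFractionalAllocation b' ∧ (∀ m, ∑ a, b' a m * w a m ≤ ∑ a, b a m * w a m) ∧
      fracEntries b' ⊂ fracEntries b := by
  classical
  obtain ⟨ε₁, ε₂, hε, hload_l, hload_l'⟩ :=
    exists_ne_zero_mul_add_mul_eq_zero_nonneg (w k l) (w k' l) (w k l') (w k' l')
  set δ : ι → ℝ := Pi.single k ε₁ + Pi.single k' ε₂
  set χ : β → ℝ := Pi.single l 1 - Pi.single l' 1
  have hδk : δ k = ε₁ := by simp [δ, hk.symm]
  have hδk' : δ k' = ε₂ := by simp [δ, hk]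
  have hχl : χ l = 1 := by simp [χ, hl]
  have hχ : ∀ m, χ m ≠ 0 → m = l ∨ m = l' := by
    intro m hm
    by_contra! h
    simp [χ, h.1, h.2] at hm
  have hδ : ∀ a, δ a ≠ 0 → a = k ∨ a = k' := by
    intro a ha
    by_contra! h
    simp [δ, h.1, h.2] at ha
  obtain ⟨t, ht, hIcc, hss⟩ := exists_pos_filter_Ioo_ssubset (fun p : ι × β => b p.1 p.2)
    (fun p => δ p.1 * χ p.2) (fun p => hb.1 p.1 p.2)
    (by
      rintro ⟨a, m⟩ h
      rcases hδ a (left_ne_zero_of_mul h) with rfl | rfl <;>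
        rcases hχ m (right_ne_zero_of_mul h) with rfl | rfl <;> assumption)
    (by
      rcases hε with h | h
      · exact ⟨(k, l), by simpa [hδk, hχl] using h⟩
      · exact ⟨(k', l), by simpa [hδk', hχl] using h⟩)
  refine ⟨fun a m => b a m + t * (δ a * χ m), ⟨fun a m => hIcc (a, m), fun a => ?_⟩,
    fun m => ?_, hss⟩
  · simp [sum_add_distrib, ← mul_sum, χ, hb.2 a]
  · have hδw : ∑ a, δ a * w a m = ε₁ * w k m + ε₂ * w k' m := by
      simp [δ, add_mul, sum_add_distrib, Pi.single_apply]
    have hsum : ∑ a, (b a m + t * (δ a * χ m)) * w a m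
        = ∑ a, b a m * w a m + t * (χ m * (ε₁ * w k m + ε₂ * w k' m)) := by
      rw [← hδw, mul_sum, mul_sum, ← sum_add_distrib]
      exact sum_congr rfl fun a _ => by ring
    have hχw : χ m * (ε₁ * w k m + ε₂ * w k' m) ≤ 0 := by
      by_cases hm : χ m = 0
      · simp [hm]
      rcases hχ m hm with rfl | rfl
      · simp [hχl, hload_l]
      · simp [χ, hl.symm]
        linarith
    rw [hsum]
    nlinarith

lemma exists_ne_mem_Ioo {b : ι → β → ℝ} (hb : IsFractionalAllocation b) {k : ι} {l : β}
    (h : b k l ∈ Set.Ioo 0 1) : ∃ l', l' ≠ l ∧ b k l' ∈ Set.Ioo 0 1 := by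
  classical
  have hrest : ∑ m ∈ univ.erase l, b k m = 1 - b k l := by
    rw [← hb.2 k, ← sum_erase_add _ _ (mem_univ l), add_sub_cancel_right]
  obtain ⟨l', hl', hne⟩ := exists_ne_zero_of_sum_ne_zero (hrest.trans_ne (by linarith [h.2]))
  refine ⟨l', ne_of_mem_erase hl', lt_of_le_of_ne (hb.1 k l').1 hne.symm, ?_⟩
  calc b k l' ≤ ∑ m ∈ univ.erase l, b k m :=
        single_le_sum (fun m _ => (hb.1 k m).1) hl'
    _ < 1 := by linarith [h.1]

/-- Every fractional row has two fractional columns, and by `hno` distinct rows have distinct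
pairs of them. -/
lemma ncard_fracRows_le_choose {b : ι → β → ℝ} (hb : IsFractionalAllocation b)
    (hno : ∀ k k' l l', l ≠ l' → b k l ∈ Set.Ioo 0 1 → b k l' ∈ Set.Ioo 0 1 →
      b k' l ∈ Set.Ioo 0 1 → b k' l' ∈ Set.Ioo 0 1 → k = k') :
    (fracRows b).ncard ≤ (Fintype.card β).choose 2 := by
  classical
  have hpair : ∀ k : fracRows b,
      ∃ l l', l ≠ l' ∧ b k l ∈ Set.Ioo 0 1 ∧ b k l' ∈ Set.Ioo 0 1 := by
    rintro ⟨k, l, hl⟩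
    obtain ⟨l', hne, hl'⟩ := exists_ne_mem_Ioo hb hl
    exact ⟨l, l', hne.symm, hl, hl'⟩
  choose L L' hLL' hL hL' using hpair
  let pair : fracRows b → {z : Sym2 β // ¬z.IsDiag} :=
    fun k => ⟨s(L k, L' k), Sym2.mk_isDiag_iff.not.2 (hLL' k)⟩
  rw [← Nat.card_coe_set_eq, ← Sym2.card_subtype_not_diag, ← Nat.card_eq_fintype_card]
  refine Nat.card_le_card_of_injective pair fun k k' hkk' => Subtype.ext ?_
  rcases Sym2.eq_iff.1 (congrArg Subtype.val hkk') with ⟨h, h'⟩ | ⟨h, h'⟩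
  · exact hno k k' (L k) (L' k) (hLL' k) (hL k) (hL' k) (h ▸ hL k') (h' ▸ hL' k')
  · exact hno k k' (L k) (L' k) (hLL' k) (hL k) (hL' k) (h ▸ hL' k') (h' ▸ hL k')

lemma exists_round_le_add_ncard_fracRows [Fintype ι] [DecidableEq β] (w : ι → β → ℝ) {M : ℝ}
    (hw₀ : ∀ k l, 0 ≤ w k l) (hwM : ∀ k l, w k l ≤ M) {b : ι → β → ℝ}
    (hb : IsFractionalAllocation b) :
    ∃ A : ι → β, ∀ l, (∑ k, if A k = l then w k l else 0)
      ≤ ∑ k, b k l * w k l + (fracRows b).ncard * M := by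
  classical
  -- On an integral row, a column with nonzero entry is the column holding its `1`.
  choose A _ hA using fun k => exists_ne_zero_of_sum_ne_zero ((hb.2 k).trans_ne one_ne_zero)
  refine ⟨A, fun l => ?_⟩
  have hpt : ∀ k, (if A k = l then w k l else 0)
      ≤ b k l * w k l + if k ∈ fracRows b then M else 0 := by
    intro k
    have hbw : 0 ≤ b k l * w k l := mul_nonneg (hb.1 k l).1 (hw₀ k l)
    by_cases hk : k ∈ fracRows b
    · rw [if_pos hk]
      split_ifs <;> linarith [hwM k l, hw₀ k l]
    · rw [if_neg hk, add_zero]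
      split_ifs with h
      · subst h
        have h1 : b k (A k) = 1 := by
          by_contra h1
          exact hk ⟨A k, lt_of_le_of_ne (hb.1 k _).1 (hA k).symm,
            lt_of_le_of_ne (hb.1 k _).2 h1⟩
        rw [h1, one_mul]
      · exact hbw
  calc (∑ k, if A k = l then w k l else 0)
      ≤ ∑ k, (b k l * w k l + if k ∈ fracRows b then M else 0) := sum_le_sum fun k _ => hpt k
    _ = ∑ k, b k l * w k l + (fracRows b).ncard * M := by
      simp [sum_add_distrib, sum_ite, Set.ncard_eq_toFinset_card']

theorem exists_round_le_add_choose [Fintype ι] [DecidableEq β] (w : ι → β → ℝ) {M : ℝ}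
    (hw₀ : ∀ k l, 0 ≤ w k l) (hwM : ∀ k l, w k l ≤ M) (hM : 0 ≤ M) {b : ι → β → ℝ}
    (hb : IsFractionalAllocation b) :
    ∃ A : ι → β, ∀ l, (∑ k, if A k = l then w k l else 0)
      ≤ ∑ k, b k l * w k l + (Fintype.card β).choose 2 * M := by
  induction hn : (fracEntries b).ncard using Nat.strong_induction_on generalizing b with
  | _ n ih =>
  by_cases hno : ∀ k k' l l', l ≠ l' → b k l ∈ Set.Ioo 0 1 → b k l' ∈ Set.Ioo 0 1 →
      b k' l ∈ Set.Ioo 0 1 → b k' l' ∈ Set.Ioo 0 1 → k = k'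
  · obtain ⟨A, hA⟩ := exists_round_le_add_ncard_fracRows w hw₀ hwM hb
    have hcard : ((fracRows b).ncard : ℝ) ≤ (Fintype.card β).choose 2 := by
      exact_mod_cast ncard_fracRows_le_choose hb hno
    exact ⟨A, fun l => (hA l).trans (by gcongr)⟩
  · push Not at hno
    obtain ⟨k, k', l, l', hl, hkl, hkl', hk'l, hk'l', hk⟩ := hno
    obtain ⟨b', hb', hle, hss⟩ := exists_exchange w hb hk hl hkl hkl' hk'l hk'l'
    obtain ⟨A, hA⟩ := ih _ (hn ▸ Set.ncard_lt_ncard hss) hb' rfl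
    exact ⟨A, fun m => (hA m).trans (by linarith [hle m])⟩

end Rounding

lemma jc_pow_three : jc ^ 3 = 1 := by
  rw [jc, ← Complex.exp_nat_mul, ← Complex.exp_two_pi_mul_I]
  push_cast
  ring_nf

lemma jc_mul_Bin_mem (l : Fin 3) : jc * Bin l ∈ ({Bin 0, Bin 1, Bin 2} : Set ℂ) := by
  fin_cases l
  · refine Or.inr (Or.inl ?_)
    show jc * (jc ^ 2 * (lam * Complex.I)) = lam * Complex.I
    linear_combination (lam * Complex.I : ℂ) * jc_pow_three
  · exact Or.inr (Or.inr rfl)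
  · refine Or.inl ?_
    show jc * (jc * (lam * Complex.I)) = jc ^ 2 * (lam * Complex.I)
    ring

lemma jc_mul_mem_Tri {y : ℂ} (hy : y ∈ Tri) : jc * y ∈ Tri := by
  have hvert : LinearMap.mulLeft ℝ jc '' {Bin 0, Bin 1, Bin 2} ⊆ {Bin 0, Bin 1, Bin 2} := by
    rintro _ ⟨z, hz, rfl⟩
    rcases hz with rfl | rfl | rfl <;> exact jc_mul_Bin_mem _
  have himage := (LinearMap.mulLeft ℝ jc).image_convexHull {Bin 0, Bin 1, Bin 2}
  exact convexHull_mono hvert (himage ▸ Set.mem_image_of_mem _ hy)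

lemma isCompact_Tri : IsCompact Tri :=
  (Set.toFinite _).isCompact_convexHull (𝕜 := ℝ)

lemma costs_nonneg {c : ℂ → ℝ} (hc : ∀ x, 0 ≤ c x) (l : Fin 3) (y : ℂ) :
    0 ≤ costs c l y := by
  fin_cases l <;> exact hc _

lemma costs_le_sSup {c : ℂ → ℝ} (hc : BddAbove (c '' Tri)) {y : ℂ} (hy : y ∈ Tri)
    (l : Fin 3) : costs c l y ≤ sSup (c '' Tri) := by
  have h₁ : jc * y ∈ Tri := jc_mul_mem_Tri hy
  have h₂ : jc ^ 2 * y ∈ Tri := by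
    rw [pow_two, mul_assoc]
    exact jc_mul_mem_Tri h₁
  fin_cases l
  · exact le_csSup hc ⟨y, hy, rfl⟩
  · exact le_csSup hc ⟨_, h₂, rfl⟩
  · exact le_csSup hc ⟨_, h₁, rfl⟩

def fracLoads (c : ℂ → ℝ) {n : ℕ} (x : Fin n → ℂ) : Set ℝ :=
  {r : ℝ | ∃ b : Fin n → Fin 3 → ℝ,
    (∀ k l, b k l ∈ Set.Icc (0 : ℝ) 1) ∧ (∀ k, b k 0 + b k 1 + b k 2 = 1) ∧
    r = Finset.univ.sup' Finset.univ_nonempty fun l => ∑ k, b k l * costs c l (x k)}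

section Loads

variable {c : ℂ → ℝ} {n : ℕ}

lemma isFractionalAllocation_iff (b : Fin n → Fin 3 → ℝ) :
    IsFractionalAllocation b ↔
      (∀ k l, b k l ∈ Set.Icc (0 : ℝ) 1) ∧ ∀ k, b k 0 + b k 1 + b k 2 = 1 := by
  simp [IsFractionalAllocation, Fin.sum_univ_three]

lemma load_mem_fracLoads (x : Fin n → ℂ) (A : Fin n → Fin 3) :
    load c x A ∈ fracLoads c x := by
  refine ⟨fun k l => if A k = l then 1 else 0, fun k l => ?_, fun k => ?_, ?_⟩
  · dsimp only
    split_ifs <;> simp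
  · dsimp only
    generalize A k = l
    fin_cases l <;> simp
  · simp only [load, ite_mul, one_mul, zero_mul]

lemma bddBelow_fracLoads (hc : ∀ x, 0 ≤ c x) (x : Fin n → ℂ) :
    BddBelow (fracLoads c x) := by
  refine ⟨0, ?_⟩
  rintro - ⟨b, hb, -, rfl⟩
  exact Finset.le_sup'_of_le _ (Finset.mem_univ (0 : Fin 3))
    (Finset.sum_nonneg fun k _ => mul_nonneg (hb k 0).1 (costs_nonneg hc _ _))

lemma fracOptLoad_le_optLoad (hc : ∀ x, 0 ≤ c x) (x : Fin n → ℂ) :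
    fracOptLoad c x ≤ optLoad c x :=
  Finset.le_inf' _ _ fun A _ => csInf_le (bddBelow_fracLoads hc x) (load_mem_fracLoads x A)

lemma optLoad_le_fracOptLoad_add (hc : ∀ x, 0 ≤ c x) (hc_bdd : BddAbove (c '' Tri))
    {x : Fin n → ℂ} (hx : ∀ k, x k ∈ Tri) :
    optLoad c x ≤ fracOptLoad c x + 3 * sSup (c '' Tri) := by
  have hM : 0 ≤ sSup (c '' Tri) :=
    (hc (Bin 0)).trans (le_csSup hc_bdd ⟨Bin 0, subset_convexHull ℝ _ (by simp), rfl⟩)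
  suffices optLoad c x - 3 * sSup (c '' Tri) ≤ fracOptLoad c x by linarith
  refine le_csInf ⟨_, load_mem_fracLoads x fun _ => 0⟩ ?_
  rintro - ⟨b, hb01, hbsum, rfl⟩
  obtain ⟨A, hA⟩ := exists_round_le_add_choose (fun k l => costs c l (x k))
    (fun k l => costs_nonneg hc l (x k)) (fun k l => costs_le_sSup hc_bdd (hx k) l) hM
    ((isFractionalAllocation_iff b).2 ⟨hb01, hbsum⟩)
  have hload : load c x A ≤ (Finset.univ.sup' Finset.univ_nonempty
      fun l => ∑ k, b k l * costs c l (x k)) + 3 * sSup (c '' Tri) :=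
    Finset.sup'_le _ _ fun l _ => (hA l).trans (by
      rw [show ((Fintype.card (Fin 3)).choose 2 : ℝ) = 3 by norm_num [Nat.choose]]
      gcongr
      exact Finset.le_sup' (fun l => ∑ k, b k l * costs c l (x k)) (Finset.mem_univ l))
  exact (sub_le_sub_right (Finset.inf'_le _ (Finset.mem_univ A)) _).trans
    (sub_le_iff_le_add.2 hload)

end Loads

lemma limsup_log_measure_lt_abs_div_sub_div_eq_bot {Ω : Type*} [MeasurableSpace Ω]
    (P : Measure Ω) (U V : ℕ → Ω → ℝ) {K : ℝ} (h : ∀ᵐ ω ∂P, ∀ n, |U n ω - V n ω| ≤ K)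
    {δ : ℝ} (hδ : 0 < δ) :
    limsup (fun n : ℕ => ENNReal.log (P {ω | δ < |U n ω / n - V n ω / n|}) / ((n : ℝ) : EReal))
      atTop = ⊥ := by
  obtain ⟨N, hN⟩ := exists_nat_gt (K / δ)
  refine (limsup_congr ?_).trans (limsup_const ⊥)
  filter_upwards [eventually_gt_atTop N] with n hn
  have hn₀ : (0 : ℝ) < n := by exact_mod_cast N.zero_le.trans_lt hn
  have hK : K < δ * n := by
    rw [div_lt_iff₀ hδ] at hN
    nlinarith [(Nat.cast_lt (α := ℝ)).2 hn]
  have hnull : P {ω | δ < |U n ω / n - V n ω / n|} = 0 := by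
    refine measure_mono_null (fun ω hω => ?_) (ae_iff.1 h)
    rw [Set.mem_ofPred_eq, div_sub_div_same, abs_div, abs_of_pos hn₀, lt_div_iff₀ hn₀] at hω
    intro hall
    linarith [hall n]
  rw [hnull, ENNReal.log_zero,
    EReal.bot_div_of_pos_ne_top (EReal.coe_pos.2 hn₀) (EReal.coe_ne_top _)]

theorem fractional_load_comparison_general
    (c : ℂ → ℝ) (hc_nonneg : ∀ x, 0 ≤ c x)
    (hc_bdd : BddAbove (c '' Tri))
    {Ω : Type*} [MeasurableSpace Ω] (P : Measure Ω)
    (X : ℕ → Ω → ℂ) (hX_meas : ∀ k, Measurable (X k))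
    (hX_law : ∀ k, Measure.map (X k) P = volume.restrict Tri) :
    (∀ᵐ ω ∂P, ∀ n : ℕ,
      optLoad c (fun k : Fin n => X k ω) - 3 * sSup (c '' Tri)
          ≤ fracOptLoad c (fun k : Fin n => X k ω) ∧
        fracOptLoad c (fun k : Fin n => X k ω) ≤ optLoad c (fun k : Fin n => X k ω)) ∧
    ∀ δ : ℝ, 0 < δ →
      limsup
        (fun n : ℕ => ENNReal.log
          (P {ω | δ < |fracOptLoad c (fun k : Fin n => X k ω) / n
            - optLoad c (fun k : Fin n => X k ω) / n|}) / ((n : ℝ) : EReal))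
        atTop = ⊥ := by
  have hTri : ∀ᵐ ω ∂P, ∀ k, X k ω ∈ Tri := ae_all_iff.2 fun k =>
    ae_of_ae_map (hX_meas k).aemeasurable
      (by rw [hX_law k]; exact ae_restrict_mem isCompact_Tri.measurableSet)
  have hcomp : ∀ᵐ ω ∂P, ∀ n : ℕ,
      optLoad c (fun k : Fin n => X k ω) - 3 * sSup (c '' Tri)
          ≤ fracOptLoad c (fun k : Fin n => X k ω) ∧
        fracOptLoad c (fun k : Fin n => X k ω) ≤ optLoad c (fun k : Fin n => X k ω) := by
    filter_upwards [hTri] with ω hω n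
    exact ⟨by linarith [optLoad_le_fracOptLoad_add hc_nonneg hc_bdd fun k : Fin n => hω k],
      fracOptLoad_le_optLoad hc_nonneg _⟩
  refine ⟨hcomp, fun δ hδ => limsup_log_measure_lt_abs_div_sub_div_eq_bot P _ _
    (K := 3 * sSup (c '' Tri)) ?_ hδ⟩
  filter_upwards [hcomp] with ω h n
  exact abs_le.2 ⟨by linarith [h n], by linarith [h n]⟩

/-- **Comparison of the integral and fractional optimal loads** (Lemma 2.2 (ii)–(iii)):
under (C3), almost surely `ρₙ − 3‖c‖_∞ ≤ ρ̃ₙ ≤ ρₙ`, and consequently `{ρ̃ₙ/n}` and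
`{ρₙ/n}` are exponentially equivalent. -/
theorem fractional_load_comparison
    (c : ℂ → ℝ) (hc_meas : Measurable c) (hc_nonneg : ∀ x, 0 ≤ c x)
    (hc_bdd : BddAbove (c '' Tri))
    (hC3 : C3 c)
    {Ω : Type*} [MeasurableSpace Ω] (P : Measure Ω) [IsProbabilityMeasure P]
    (X : ℕ → Ω → ℂ) (hX_meas : ∀ k, Measurable (X k))
    (hX_law : ∀ k, Measure.map (X k) P = volume.restrict Tri)
    (hX_indep : ProbabilityTheory.iIndepFun X P) :
    (∀ᵐ ω ∂P, ∀ n : ℕ,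
      optLoad c (fun k : Fin n => X k ω) - 3 * sSup (c '' Tri)
          ≤ fracOptLoad c (fun k : Fin n => X k ω) ∧
        fracOptLoad c (fun k : Fin n => X k ω) ≤ optLoad c (fun k : Fin n => X k ω)) ∧
    ∀ δ : ℝ, 0 < δ →
      limsup
        (fun n : ℕ => ENNReal.log
          (P {ω | δ < |fracOptLoad c (fun k : Fin n => X k ω) / n
            - optLoad c (fun k : Fin n => X k ω) / n|}) / ((n : ℝ) : EReal))
        atTop = ⊥ :=
  fractional_load_comparison_general c hc_nonneg hc_bdd P X hX_meas hX_law

end LoadOpt
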